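/- arXiv:2402.08066 — 2 statements merged into one kernel-verified Lean document; each statement's English description precedes it below -/
import Mathlib

section
/- Let d ≥ 1, let a be a partition of length d, let μ = lcm(1,2,…,d), and let L ∈ 𝓛(d) be a composition of d. Then v(L, μa) is a partition of length d: all of its entries are nonnegative integers and the sequence is weakly decreasing. -/
open Finset

/-- A partition of length `d`: a weakly decreasing sequence of natural numbers. -/
def IsPartition (d : ℕ) (a : Fin d → ℕ) : Prop :=
  ∀ i j : Fin d, i ≤ j → a j ≤ a i

/-- The weight `|a|` of a sequence: the sum of its entries. -/
def weight (d : ℕ) (a : Fin d → ℕ) : ℕ := ∑ i, a i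

/-- The sum of the first `k` entries of `a`. -/
def psum (d : ℕ) (a : Fin d → ℕ) (k : ℕ) : ℕ :=
  ∑ i : Fin d, if (i : ℕ) < k then a i else 0

/-- The extended dominance order on nonzero partitions of length `d`:
`b ⪯ a` iff `|a|·(b₁+⋯+b_k) ≤ |b|·(a₁+⋯+a_k)` for all `1 ≤ k ≤ d-1`. -/
def ExtDom (d : ℕ) (b a : Fin d → ℕ) : Prop :=
  ∀ k : ℕ, 1 ≤ k → k ≤ d - 1 → weight d a * psum d b k ≤ weight d b * psum d a k

/-- `L` is a composition of `d`: a list of positive integers summing to `d`. -/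
def IsComposition (d : ℕ) (L : List ℕ) : Prop :=
  (∀ x ∈ L, 0 < x) ∧ L.sum = d

/-- Given a composition `L` and an index `i`, return the pair
`(start, length)` of the consecutive block of `L` containing position `i`. -/
def blockOf : List ℕ → ℕ → ℕ × ℕ
  | [], _ => (0, 0)
  | l :: L, i =>
      if i < l then (0, l)
      else
        let p := blockOf L (i - l)
        (p.1 + l, p.2)

/-- The sum of the entries of `a` over the block of `L` containing position `i`. -/
def blockSum (d : ℕ) (L : List ℕ) (a : Fin d → ℕ) (i : Fin d) : ℕ :=
  ∑ j : Fin d,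
    if (blockOf L (i : ℕ)).1 ≤ (j : ℕ) ∧ (j : ℕ) < (blockOf L (i : ℕ)).1 + (blockOf L (i : ℕ)).2
    then a j else 0

/-- `v(L, a)`: each consecutive block of `a` (with lengths given by `L`) is replaced by the
constant block whose entries all equal the average of that block. -/
def vSeq (d : ℕ) (L : List ℕ) (a : Fin d → ℕ) (i : Fin d) : ℕ :=
  blockSum d L a i / (blockOf L (i : ℕ)).2

/-- `μ = lcm(1,2,…,d)`. -/
def mu (d : ℕ) : ℕ := (Finset.Icc 1 d).lcm id

/-! Every block length `l` of a composition of `d` lies in `{1, …, d}`, so `l ∣ μ` and all block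
averages of `μa` are integers. Since `a` is weakly decreasing, each entry of an earlier block
dominates each entry of a later one, so the block averages decrease as well. -/

section Blocks

variable {d : ℕ} (L : List ℕ)

lemma blockOf_snd_mem {i : ℕ} (hi : i < L.sum) : (blockOf L i).2 ∈ L := by
  induction L generalizing i with
  | nil => simp at hi
  | cons l L ih =>
    rw [List.sum_cons] at hi
    by_cases h : i < l
    · simp [blockOf, h]
    · simpa [blockOf, h] using Or.inr (ih (i := i - l) (by omega))

lemma blockOf_fst_add_snd_le_sum {i : ℕ} (hi : i < L.sum) :
    (blockOf L i).1 + (blockOf L i).2 ≤ L.sum := by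
  induction L generalizing i with
  | nil => simp at hi
  | cons l L ih =>
    rw [List.sum_cons] at hi ⊢
    by_cases h : i < l
    · simp [blockOf, h]
    · have := ih (i := i - l) (by omega)
      simp only [blockOf, h, if_false]
      omega

lemma blockOf_eq_or_le_of_le {i j : ℕ} (hij : i ≤ j) :
    blockOf L i = blockOf L j ∨ (blockOf L i).1 + (blockOf L i).2 ≤ (blockOf L j).1 := by
  induction L generalizing i j with
  | nil => exact Or.inl rfl
  | cons l L ih =>
    by_cases hj : j < l
    · simp [blockOf, hj, show i < l by omega]
    by_cases hi : i < l
    · right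
      simp only [blockOf, hi, hj, if_true, if_false]
      omega
    · simp only [blockOf, hi, hj, if_false, Prod.mk.injEq, add_left_inj]
      rcases ih (i := i - l) (j := j - l) (by omega) with h | h
      · exact Or.inl ⟨congrArg Prod.fst h, congrArg Prod.snd h⟩
      · right; omega

def block (i : Fin d) : Finset (Fin d) :=
  {j | (blockOf L i).1 ≤ (j : ℕ) ∧ (j : ℕ) < (blockOf L i).1 + (blockOf L i).2}

lemma blockSum_eq_sum_block (a : Fin d → ℕ) (i : Fin d) :
    blockSum d L a i = ∑ j ∈ block L i, a j := by
  rw [block, Finset.sum_filter]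
  rfl

lemma blockSum_smul (c : ℕ) (a : Fin d → ℕ) (i : Fin d) :
    blockSum d L (c • a) i = c * blockSum d L a i := by
  simp only [blockSum_eq_sum_block, Pi.smul_apply, smul_eq_mul, Finset.mul_sum]

lemma card_block {i : Fin d} (h : (blockOf L i).1 + (blockOf L i).2 ≤ d) :
    #(block L i) = (blockOf L i).2 := by
  have : (block L i).map Fin.valEmbedding =
      Finset.Ico (blockOf L i).1 ((blockOf L i).1 + (blockOf L i).2) := by
    ext n
    simp only [block, Finset.mem_map, Finset.mem_filter, Finset.mem_univ, true_and,
      Fin.valEmbedding_apply, Finset.mem_Ico]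
    exact ⟨fun ⟨j, hj, hjn⟩ => hjn ▸ hj, fun hn => ⟨⟨n, by omega⟩, hn, rfl⟩⟩
  rw [← Finset.card_map, this, Nat.card_Ico, Nat.add_sub_cancel_left]

lemma lt_of_mem_block_of_mem_block {i j p q : Fin d}
    (hij : (blockOf L i).1 + (blockOf L i).2 ≤ (blockOf L j).1)
    (hp : p ∈ block L i) (hq : q ∈ block L j) : p < q := by
  simp only [block, Finset.mem_filter, Finset.mem_univ, true_and] at hp hq
  exact Fin.lt_def.mpr (by omega)

end Blocks

lemma card_mul_sum_le_card_mul_sum {ι R : Type*} [CommSemiring R] [PartialOrder R]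
    [IsOrderedRing R] {s t : Finset ι} {f : ι → R} (h : ∀ p ∈ s, ∀ q ∈ t, f q ≤ f p) :
    #s * ∑ q ∈ t, f q ≤ #t * ∑ p ∈ s, f p := by
  calc (#s : R) * ∑ q ∈ t, f q = ∑ p ∈ s, ∑ q ∈ t, f q := by
        rw [Finset.sum_const, nsmul_eq_mul]
    _ ≤ ∑ p ∈ s, ∑ _q ∈ t, f p :=
        Finset.sum_le_sum fun p hp => Finset.sum_le_sum fun q hq => h p hp q hq
    _ = #t * ∑ p ∈ s, f p := by
        simp only [Finset.sum_const, nsmul_eq_mul, Finset.mul_sum]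

lemma Nat.mul_div_le_mul_div_of_mul_le_mul {m S S' e e' : ℕ} (he' : e' ∣ m) (he : 0 < e)
    (h : e * S' ≤ e' * S) : m * S' / e' ≤ m * S / e := by
  obtain ⟨k, rfl⟩ := he'
  rcases Nat.eq_zero_or_pos e' with rfl | he'
  · simp
  rw [Nat.le_div_iff_mul_le he, mul_assoc, Nat.mul_div_cancel_left _ he']
  calc k * S' * e = k * (e * S') := by ring
    _ ≤ k * (e' * S) := Nat.mul_le_mul_left k h
    _ = e' * k * S := by ring

lemma dvd_mu {d l : ℕ} (hl : 0 < l) (hld : l ≤ d) : l ∣ mu d :=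
  Finset.dvd_lcm (f := id) (Finset.mem_Icc.mpr ⟨hl, hld⟩)

theorem vSeq_isPartition_general (d : ℕ) (a : Fin d → ℕ)
    (ha : IsPartition d a) (L : List ℕ) (hL : IsComposition d L) :
    (∀ i : Fin d, (blockOf L (i : ℕ)).2 ∣ blockSum d L (mu d • a) i) ∧
      IsPartition d (vSeq d L (mu d • a)) := by
  obtain ⟨hpos, rfl⟩ := hL
  have hmem (i : Fin L.sum) := blockOf_snd_mem L i.isLt
  have hend (i : Fin L.sum) := blockOf_fst_add_snd_le_sum L i.isLt
  have hdvd (i : Fin L.sum) : (blockOf L i).2 ∣ mu L.sum :=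
    dvd_mu (hpos _ (hmem i)) (List.le_sum_of_mem (hmem i))
  refine ⟨fun i => by rw [blockSum_smul]; exact (hdvd i).mul_right _, fun i j hij => ?_⟩
  rcases blockOf_eq_or_le_of_le L (Fin.le_def.mp hij) with heq | hsep
  · simp only [vSeq, blockSum, heq, le_refl]
  have hsum : (blockOf L i).2 * blockSum _ L a j ≤ (blockOf L j).2 * blockSum _ L a i := by
    simp only [blockSum_eq_sum_block, ← card_block L (hend i), ← card_block L (hend j)]
    exact card_mul_sum_le_card_mul_sum fun p hp q hq =>
      ha p q (lt_of_mem_block_of_mem_block L hsep hp hq).le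
  simp only [vSeq, blockSum_smul]
  exact Nat.mul_div_le_mul_div_of_mul_le_mul (hdvd j) (hpos _ (hmem i)) hsum

/-- for a partition `a` of length `d` and a composition `L` of `d`,
`v(L, μa)` is a partition of length `d`: its entries are (nonnegative) integers, i.e. each
block length divides the corresponding block sum of `μa`, and it is weakly decreasing. -/
theorem vSeq_isPartition (d : ℕ) (hd : 1 ≤ d) (a : Fin d → ℕ)
    (ha : IsPartition d a) (L : List ℕ) (hL : IsComposition d L) :
    (∀ i : Fin d, (blockOf L (i : ℕ)).2 ∣ blockSum d L (mu d • a) i) ∧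
      IsPartition d (vSeq d L (mu d • a)) :=
  vSeq_isPartition_general d a ha L hL
end

section
/- Let d ≥ 1 and let a be a nonzero partition of length d. Then the set Z(a) ∪ {0} ⊆ ℕ^d, where Z(a) is the set of nonzero partitions b of length d with b ⪯ a in the extended dominance order, is a finitely generated additive submonoid of ℕ^d (with componentwise addition). -/
open Finset

/-!
A sequence `b` lies in `Z(a) ∪ {0}` iff it satisfies finitely many `ℕ`-linear inequalities
`f b ≤ g b`: the partition inequalities `b j ≤ b i` for `i ≤ j` and the dominance inequalities
`|a| · psum b k ≤ |b| · psum a k`, whose coefficients depend only on `a`. Adding slack variables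
turns the solution set of such a system into the projection of the equalizer of two additive
maps on the well-quasi-ordered monoid `ℕ^d × ℕ^m`, which is finitely generated by Gordan's lemma.
-/

namespace AddMonoidHom

variable {M N : Type*} [AddCommMonoid M] [AddCommMonoid N] [PartialOrder N]
  [IsOrderedAddMonoid N]

def leLocus (f g : M →+ N) : AddSubmonoid M where
  carrier := {x | f x ≤ g x}
  zero_mem' := by simp
  add_mem' {x y} hx hy := by
    simp only [Set.mem_ofPred_eq, map_add]
    exact add_le_add hx hy

@[simp]
theorem mem_leLocus {f g : M →+ N} {x : M} : x ∈ f.leLocus g ↔ f x ≤ g x := Iff.rfl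

end AddMonoidHom

theorem AddSubmonoid.fg_leLocus {M N : Type*}
    [AddCommMonoid M] [PartialOrder M] [WellQuasiOrderedLE M] [IsOrderedCancelAddMonoid M]
    [CanonicallyOrderedAdd M]
    [AddCommMonoid N] [PartialOrder N] [WellQuasiOrderedLE N] [IsOrderedCancelAddMonoid N]
    [CanonicallyOrderedAdd N] (f g : M →+ N) : (f.leLocus g).FG := by
  open AddMonoidHom in
  have slack : f.leLocus g =
      ((f.comp (fst M N) + snd M N).eqLocusM (g.comp (fst M N))).map (fst M N) := by
    ext x
    simp [le_iff_exists_add, eq_comm]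
  rw [slack]
  exact (AddSubmonoid.fg_eqLocusM _ _).map _

section Constraints

variable (d : ℕ)

def weightHom : (Fin d → ℕ) →+ ℕ := ∑ i, Pi.evalAddMonoidHom (fun _ => ℕ) i

def psumHom (k : ℕ) : (Fin d → ℕ) →+ ℕ :=
  ∑ i : Fin d with i.val < k, Pi.evalAddMonoidHom (fun _ => ℕ) i

variable {d}

@[simp]
theorem weightHom_apply (b : Fin d → ℕ) : weightHom d b = weight d b := by
  simp [weightHom, weight]

@[simp]
theorem psumHom_apply (k : ℕ) (b : Fin d → ℕ) : psumHom d k b = psum d b k := by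
  simp only [psumHom, psum, AddMonoidHom.finsetSum_apply, Finset.sum_filter]
  exact Finset.sum_congr rfl fun i _ => by split_ifs <;> rfl

variable (d)

abbrev OrderedPairs : Type := {p : Fin d × Fin d // p.1 ≤ p.2}

def laterEntries : (Fin d → ℕ) →+ (OrderedPairs d → ℕ) :=
  AddMonoidHom.pi fun p => Pi.evalAddMonoidHom (fun _ => ℕ) p.1.2

def earlierEntries : (Fin d → ℕ) →+ (OrderedPairs d → ℕ) :=
  AddMonoidHom.pi fun p => Pi.evalAddMonoidHom (fun _ => ℕ) p.1.1

def scaledPsums (a : Fin d → ℕ) : (Fin d → ℕ) →+ (Finset.Icc 1 (d - 1) → ℕ) :=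
  AddMonoidHom.pi fun k => weight d a • psumHom d k

def scaledWeights (a : Fin d → ℕ) : (Fin d → ℕ) →+ (Finset.Icc 1 (d - 1) → ℕ) :=
  AddMonoidHom.pi fun k => psum d a k • weightHom d

variable {d}

theorem isPartition_iff_laterEntries_le (b : Fin d → ℕ) :
    IsPartition d b ↔ laterEntries d b ≤ earlierEntries d b := by
  simp [IsPartition, laterEntries, earlierEntries, Pi.le_def]

theorem extDom_iff_scaledPsums_le (a b : Fin d → ℕ) :
    ExtDom d b a ↔ scaledPsums d a b ≤ scaledWeights d a b := by
  simp [ExtDom, scaledPsums, scaledWeights, Pi.le_def, mul_comm]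

theorem isPartition_zero : IsPartition d 0 := fun _ _ _ => le_rfl

theorem extDom_zero_left (a : Fin d → ℕ) : ExtDom d 0 a := by
  intro k _ _
  simp [psum]

end Constraints

theorem Za_fg_submonoid_general (d : ℕ) (a : Fin d → ℕ) :
    ∃ M : AddSubmonoid (Fin d → ℕ),
      (M : Set (Fin d → ℕ)) =
        {b : Fin d → ℕ | b = 0 ∨ (IsPartition d b ∧ b ≠ 0 ∧ ExtDom d b a)} ∧
      M.FG := by
  refine ⟨((laterEntries d).prod (scaledPsums d a)).leLocus
    ((earlierEntries d).prod (scaledWeights d a)), ?_, AddSubmonoid.fg_leLocus _ _⟩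
  ext b
  simp only [SetLike.mem_coe, AddMonoidHom.mem_leLocus, AddMonoidHom.prod_apply, Prod.mk_le_mk,
    ← isPartition_iff_laterEntries_le, ← extDom_iff_scaledPsums_le, Set.mem_ofPred_eq]
  by_cases hb : b = 0
  · simp [hb, isPartition_zero, extDom_zero_left]
  · simp [hb]

/-- `Z(a) ∪ {0}` is a finitely generated additive submonoid of `ℕ^d`. -/
theorem Za_fg_submonoid (d : ℕ) (hd : 1 ≤ d) (a : Fin d → ℕ)
    (ha : IsPartition d a) (ha0 : a ≠ 0) :
    ∃ M : AddSubmonoid (Fin d → ℕ),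
      (M : Set (Fin d → ℕ)) =
        {b : Fin d → ℕ | b = 0 ∨ (IsPartition d b ∧ b ≠ 0 ∧ ExtDom d b a)} ∧
      M.FG :=
  Za_fg_submonoid_general d a
end
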